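/- arXiv:2508.00618 — 6 statements merged into one kernel-verified Lean document; each statement's English description precedes it below -/
import Mathlib

section
/- Let J be a finite index type and let m, b : J → ℕ satisfy m j ≥ 1 and b j ≥ 1 for all j. Suppose ∑_{j∈J} (m j)·(b j) = 10 and, computing in ℚ, ∑_{j∈J} ((m j)·(b j))/((m j)+1) < 2. Then the multiset {(m j, b j) : j ∈ J} of pairs is one of the following nine multisets: {(10,1)}, {(9,1),(1,1)}, {(8,1),(2,1)}, {(8,1),(1,1),(1,1)}, {(8,1),(1,2)}, {(7,1),(3,1)}, {(6,1),(4,1)}, {(5,1),(5,1)}, {(5,2)}. -/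
set_option maxRecDepth 10000 in
private lemma gsc_L1 : ∀ m1 ∈ Finset.range 11, ∀ b1 ∈ Finset.range 11, 1 ≤ m1 → 1 ≤ b1 →
    m1*b1 = 10 → m1*b1 < 2*(m1+1) →
    (m1 = 10 ∧ b1 = 1) ∨ (m1 = 5 ∧ b1 = 2) := by decide

set_option maxRecDepth 4000000 in
set_option maxHeartbeats 1000000 in
set_option synthInstance.maxHeartbeats 1000000 in
set_option synthInstance.maxSize 2000 in
private lemma gsc_L2 : ∀ m1 ∈ Finset.range 11, ∀ b1 ∈ Finset.range 11,
    ∀ m2 ∈ Finset.range 11, ∀ b2 ∈ Finset.range 11,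
    1 ≤ m1 → 1 ≤ b1 → 1 ≤ m2 → 1 ≤ b2 →
    m1*b1 + m2*b2 = 10 →
    m1*b1*(m2+1) + m2*b2*(m1+1) < 2*((m1+1)*(m2+1)) →
    (m1 = 9 ∧ b1 = 1 ∧ m2 = 1 ∧ b2 = 1) ∨ (m1 = 1 ∧ b1 = 1 ∧ m2 = 9 ∧ b2 = 1) ∨
    (m1 = 8 ∧ b1 = 1 ∧ m2 = 2 ∧ b2 = 1) ∨ (m1 = 2 ∧ b1 = 1 ∧ m2 = 8 ∧ b2 = 1) ∨
    (m1 = 8 ∧ b1 = 1 ∧ m2 = 1 ∧ b2 = 2) ∨ (m1 = 1 ∧ b1 = 2 ∧ m2 = 8 ∧ b2 = 1) ∨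
    (m1 = 7 ∧ b1 = 1 ∧ m2 = 3 ∧ b2 = 1) ∨ (m1 = 3 ∧ b1 = 1 ∧ m2 = 7 ∧ b2 = 1) ∨
    (m1 = 6 ∧ b1 = 1 ∧ m2 = 4 ∧ b2 = 1) ∨ (m1 = 4 ∧ b1 = 1 ∧ m2 = 6 ∧ b2 = 1) ∨
    (m1 = 5 ∧ b1 = 1 ∧ m2 = 5 ∧ b2 = 1) := by decide

set_option maxRecDepth 1000000 in
set_option synthInstance.maxHeartbeats 1000000 in
set_option synthInstance.maxSize 2000 in
private lemma gsc_L3 : ∀ m1 ∈ Finset.range 11, ∀ m2 ∈ Finset.range 11, ∀ m3 ∈ Finset.range 11,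
    1 ≤ m1 → 1 ≤ m2 → 1 ≤ m3 → m1 + m2 + m3 = 10 →
    m1*(m2+1)*(m3+1) + m2*(m1+1)*(m3+1) + m3*(m1+1)*(m2+1) < 2*((m1+1)*(m2+1)*(m3+1)) →
    (m1 = 8 ∧ m2 = 1 ∧ m3 = 1) ∨ (m1 = 1 ∧ m2 = 8 ∧ m3 = 1) ∨
    (m1 = 1 ∧ m2 = 1 ∧ m3 = 8) := by decide

private lemma gsc_half (x y : ℕ) (hx : 1 ≤ x) (hy : 1 ≤ y) :
    (1/2 : ℚ) ≤ ((x:ℚ) * y) / ((x:ℚ) + 1) := by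
  have hx' : (1:ℚ) ≤ x := by exact_mod_cast hx
  have hy' : (1:ℚ) ≤ y := by exact_mod_cast hy
  rw [le_div_iff₀ (by linarith)]
  nlinarith

/-- Numerical core of the classification in Proposition 3.5: if `∑ m j * b j = 10`
and `∑ (m j * b j)/(m j + 1) < 2` in `ℚ`, then the multiset of pairs `(m j, b j)`
is one of nine explicit multisets. -/
theorem genus_six_classification
    (J : Type*) [Fintype J]
    (m b : J → ℕ) (hm : ∀ j, 1 ≤ m j) (hb : ∀ j, 1 ≤ b j)
    (hsum : ∑ j, m j * b j = 10)
    (hlt : ∑ j, ((m j : ℚ) * (b j : ℚ)) / ((m j : ℚ) + 1) < 2) :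
    (Finset.univ.val.map (fun j => (m j, b j)) = ({(10,1)} : Multiset (ℕ × ℕ))) ∨
    (Finset.univ.val.map (fun j => (m j, b j)) = ({(9,1),(1,1)} : Multiset (ℕ × ℕ))) ∨
    (Finset.univ.val.map (fun j => (m j, b j)) = ({(8,1),(2,1)} : Multiset (ℕ × ℕ))) ∨
    (Finset.univ.val.map (fun j => (m j, b j)) = ({(8,1),(1,1),(1,1)} : Multiset (ℕ × ℕ))) ∨
    (Finset.univ.val.map (fun j => (m j, b j)) = ({(8,1),(1,2)} : Multiset (ℕ × ℕ))) ∨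
    (Finset.univ.val.map (fun j => (m j, b j)) = ({(7,1),(3,1)} : Multiset (ℕ × ℕ))) ∨
    (Finset.univ.val.map (fun j => (m j, b j)) = ({(6,1),(4,1)} : Multiset (ℕ × ℕ))) ∨
    (Finset.univ.val.map (fun j => (m j, b j)) = ({(5,1),(5,1)} : Multiset (ℕ × ℕ))) ∨
    (Finset.univ.val.map (fun j => (m j, b j)) = ({(5,2)} : Multiset (ℕ × ℕ))) := by
  classical
  set s : Multiset (ℕ × ℕ) := Finset.univ.val.map (fun j => (m j, b j)) with hsdef
  have hmem : ∀ p ∈ s, 1 ≤ p.1 ∧ 1 ≤ p.2 := by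
    intro p hp
    obtain ⟨j, _, rfl⟩ := Multiset.mem_map.1 hp
    exact ⟨hm j, hb j⟩
  have h2 : (s.map fun p => p.1 * p.2).sum = 10 := by
    rw [hsdef, Multiset.map_map]
    exact hsum
  have h3 : (s.map fun p => ((p.1:ℚ) * (p.2:ℚ)) / ((p.1:ℚ) + 1)).sum < 2 := by
    rw [hsdef, Multiset.map_map]
    exact hlt
  -- card bound
  have hcard : Multiset.card s ≤ 3 := by
    by_contra hc
    push_neg at hc
    have hlow : ∀ q ∈ s.map (fun p => ((p.1:ℚ) * (p.2:ℚ)) / ((p.1:ℚ) + 1)), (1/2:ℚ) ≤ q := by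
      intro q hq
      obtain ⟨p, hp, rfl⟩ := Multiset.mem_map.1 hq
      exact gsc_half p.1 p.2 (hmem p hp).1 (hmem p hp).2
    have h4 := Multiset.card_nsmul_le_sum hlow
    rw [Multiset.card_map, nsmul_eq_mul] at h4
    have hc4 : (4:ℚ) ≤ (Multiset.card s : ℚ) := by exact_mod_cast hc
    nlinarith [h4, h3]
  have hc0 : Multiset.card s = 0 ∨ Multiset.card s = 1 ∨ Multiset.card s = 2 ∨
      Multiset.card s = 3 := by omega
  rcases hc0 with hc | hc | hc | hc
  · -- impossible: sum would be 0
    rw [Multiset.card_eq_zero] at hc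
    rw [hc] at h2
    simp at h2
  · -- one element
    obtain ⟨a, hs1⟩ := Multiset.card_eq_one.1 hc
    obtain ⟨a1, a2⟩ := a
    rw [hs1] at h2 h3 hmem
    simp only [Multiset.map_singleton, Multiset.sum_singleton] at h2 h3
    obtain ⟨ha1, ha2⟩ := hmem (a1, a2) (Multiset.mem_singleton_self _)
    have hd : (0:ℚ) < (a1:ℚ) + 1 := by positivity
    rw [div_lt_iff₀ hd] at h3
    have hN : a1 * a2 < 2 * (a1 + 1) := by exact_mod_cast (by push_cast; linarith :
      ((a1 * a2 : ℕ) : ℚ) < ((2 * (a1 + 1) : ℕ) : ℚ))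
    have hb1 : a1 ≤ a1 * a2 := Nat.le_mul_of_pos_right _ ha2
    have hb2 : a2 ≤ a1 * a2 := Nat.le_mul_of_pos_left _ ha1
    have key := gsc_L1 a1 (Finset.mem_range.2 (by omega)) a2 (Finset.mem_range.2 (by omega))
      ha1 ha2 h2 hN
    rcases key with ⟨rfl, rfl⟩ | ⟨rfl, rfl⟩ <;> rw [hs1] <;> decide
  · -- two elements
    obtain ⟨a, c, hs2⟩ := Multiset.card_eq_two.1 hc
    obtain ⟨a1, a2⟩ := a
    obtain ⟨c1, c2⟩ := c
    rw [hs2] at h2 h3 hmem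
    simp only [Multiset.insert_eq_cons, Multiset.map_cons, Multiset.sum_cons,
      Multiset.map_singleton, Multiset.sum_singleton] at h2 h3
    obtain ⟨ha1, ha2⟩ := hmem (a1, a2) (by simp)
    obtain ⟨hc1, hc2⟩ := hmem (c1, c2) (by simp)
    have hda : (0:ℚ) < (a1:ℚ) + 1 := by positivity
    have hdc : (0:ℚ) < (c1:ℚ) + 1 := by positivity
    rw [div_add_div _ _ (ne_of_gt hda) (ne_of_gt hdc), div_lt_iff₀ (mul_pos hda hdc)] at h3
    have hN : a1 * a2 * (c1 + 1) + c1 * c2 * (a1 + 1) < 2 * ((a1 + 1) * (c1 + 1)) := by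
      have : ((a1 * a2 * (c1 + 1) + c1 * c2 * (a1 + 1) : ℕ) : ℚ) <
          ((2 * ((a1 + 1) * (c1 + 1)) : ℕ) : ℚ) := by push_cast; nlinarith [h3]
      exact_mod_cast this
    have hba : a1 ≤ a1 * a2 := Nat.le_mul_of_pos_right _ ha2
    have hba' : a2 ≤ a1 * a2 := Nat.le_mul_of_pos_left _ ha1
    have hbc : c1 ≤ c1 * c2 := Nat.le_mul_of_pos_right _ hc2
    have hbc' : c2 ≤ c1 * c2 := Nat.le_mul_of_pos_left _ hc1
    have key := gsc_L2 a1 (Finset.mem_range.2 (by omega)) a2 (Finset.mem_range.2 (by omega))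
      c1 (Finset.mem_range.2 (by omega)) c2 (Finset.mem_range.2 (by omega))
      ha1 ha2 hc1 hc2 h2 hN
    rcases key with ⟨rfl,rfl,rfl,rfl⟩|⟨rfl,rfl,rfl,rfl⟩|⟨rfl,rfl,rfl,rfl⟩|⟨rfl,rfl,rfl,rfl⟩|
      ⟨rfl,rfl,rfl,rfl⟩|⟨rfl,rfl,rfl,rfl⟩|⟨rfl,rfl,rfl,rfl⟩|⟨rfl,rfl,rfl,rfl⟩|
      ⟨rfl,rfl,rfl,rfl⟩|⟨rfl,rfl,rfl,rfl⟩|⟨rfl,rfl,rfl,rfl⟩ <;> rw [hs2] <;> decide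
  · -- three elements
    obtain ⟨a, c, d, hs3⟩ := Multiset.card_eq_three.1 hc
    obtain ⟨a1, a2⟩ := a
    obtain ⟨c1, c2⟩ := c
    obtain ⟨d1, d2⟩ := d
    rw [hs3] at h2 h3 hmem
    simp only [Multiset.insert_eq_cons, Multiset.map_cons, Multiset.sum_cons,
      Multiset.map_singleton, Multiset.sum_singleton] at h2 h3
    obtain ⟨ha1, ha2⟩ := hmem (a1, a2) (by simp)
    obtain ⟨hc1, hc2⟩ := hmem (c1, c2) (by simp)
    obtain ⟨hd1, hd2⟩ := hmem (d1, d2) (by simp)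
    have hha := gsc_half a1 a2 ha1 ha2
    have hhc := gsc_half c1 c2 hc1 hc2
    have hhd := gsc_half d1 d2 hd1 hd2
    -- each term is < 1, so each second coordinate is 1
    have hone : ∀ x y : ℕ, 1 ≤ x → 1 ≤ y →
        ((x:ℚ) * y) / ((x:ℚ) + 1) < 1 → y = 1 := by
      intro x y hx hy h
      rw [div_lt_one (by positivity)] at h
      have hN : x * y < x + 1 := by exact_mod_cast (by push_cast; linarith :
        ((x * y : ℕ) : ℚ) < ((x + 1 : ℕ) : ℚ))
      have hx' : x ≤ x * y := Nat.le_mul_of_pos_right _ hy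
      have : x * y = x * 1 := by omega
      exact Nat.eq_of_mul_eq_mul_left hx this
    have ea2 : a2 = 1 := hone a1 a2 ha1 ha2 (by linarith)
    have ec2 : c2 = 1 := hone c1 c2 hc1 hc2 (by linarith)
    have ed2 : d2 = 1 := hone d1 d2 hd1 hd2 (by linarith)
    subst ea2 ec2 ed2
    simp only [mul_one, Nat.cast_one] at h2 h3
    have hda : (0:ℚ) < (a1:ℚ) + 1 := by positivity
    have hdc : (0:ℚ) < (c1:ℚ) + 1 := by positivity
    have hdd : (0:ℚ) < (d1:ℚ) + 1 := by positivity
    rw [div_add_div _ _ (ne_of_gt hdc) (ne_of_gt hdd),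
      div_add_div _ _ (ne_of_gt hda) (ne_of_gt (mul_pos hdc hdd)),
      div_lt_iff₀ (mul_pos hda (mul_pos hdc hdd))] at h3
    have hN : a1*(c1+1)*(d1+1) + c1*(a1+1)*(d1+1) + d1*(a1+1)*(c1+1) <
        2*((a1+1)*(c1+1)*(d1+1)) := by
      have : ((a1*(c1+1)*(d1+1) + c1*(a1+1)*(d1+1) + d1*(a1+1)*(c1+1) : ℕ) : ℚ) <
          ((2*((a1+1)*(c1+1)*(d1+1)) : ℕ) : ℚ) := by push_cast; nlinarith [h3]
      exact_mod_cast this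
    have key := gsc_L3 a1 (Finset.mem_range.2 (by omega)) c1 (Finset.mem_range.2 (by omega))
      d1 (Finset.mem_range.2 (by omega)) ha1 hc1 hd1 (by omega) hN
    rcases key with ⟨rfl,rfl,rfl⟩|⟨rfl,rfl,rfl⟩|⟨rfl,rfl,rfl⟩ <;> rw [hs3] <;> decide
end

section
/- Let J be a finite index type and let m, b : J → ℕ satisfy m j ≥ 1 and b j ≥ 1 for all j. Suppose ∑_{j∈J} (m j)·(b j) = 10, ∑_{j∈J} ((m j)·(b j))/((m j)+1) < 2 in ℚ, and the maximum of m over J equals 9. Then the multiset {(m j, b j) : j ∈ J} equals {(9,1),(1,1)}. -/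
/-- Numerical core of case (2) of Proposition 3.5 (maximal multiplicity α = 9). -/
theorem genus_six_classification_alpha_nine
    (J : Type*) [Fintype J]
    (m b : J → ℕ) (hm : ∀ j, 1 ≤ m j) (hb : ∀ j, 1 ≤ b j)
    (hsum : ∑ j, m j * b j = 10)
    (hlt : ∑ j, ((m j : ℚ) * (b j : ℚ)) / ((m j : ℚ) + 1) < 2)
    (hmax : Finset.univ.sup m = 9) :
    Finset.univ.val.map (fun j => (m j, b j)) = ({(9,1),(1,1)} : Multiset (ℕ × ℕ)) := by
  classical
  have hne : (Finset.univ : Finset J).Nonempty := by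
    rcases (Finset.univ : Finset J).eq_empty_or_nonempty with h | h
    · rw [h] at hmax; simp at hmax
    · exact h
  obtain ⟨j0, -, hj0⟩ := Finset.exists_mem_eq_sup Finset.univ hne m
  have hm0 : m j0 = 9 := by rw [← hj0, hmax]
  have hle : m j0 * b j0 ≤ 10 := by
    rw [← hsum]
    exact Finset.single_le_sum (f := fun j => m j * b j) (fun i _ => Nat.zero_le _) (Finset.mem_univ j0)
  have hb0 : b j0 = 1 := by
    have := hb j0
    rw [hm0] at hle; omega
  have hsplit : m j0 * b j0 + ∑ j ∈ Finset.univ.erase j0, m j * b j = 10 := by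
    rw [Finset.add_sum_erase Finset.univ (fun j => m j * b j) (Finset.mem_univ j0), hsum]
  have hrest : ∑ j ∈ Finset.univ.erase j0, m j * b j = 1 := by
    rw [hm0, hb0] at hsplit; omega
  have hcard : (Finset.univ.erase j0).card ≤ 1 := by
    calc (Finset.univ.erase j0).card = ∑ _j ∈ Finset.univ.erase j0, 1 := by simp
      _ ≤ ∑ j ∈ Finset.univ.erase j0, m j * b j :=
          Finset.sum_le_sum (fun i _ => Nat.one_le_iff_ne_zero.mpr
            (by have := hm i; have := hb i; positivity))
      _ = 1 := hrest
  have hcard' : (Finset.univ.erase j0).card = 1 := by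
    rcases Nat.lt_or_ge (Finset.univ.erase j0).card 1 with h | h
    · exfalso
      have : Finset.univ.erase j0 = ∅ := Finset.card_eq_zero.mp (by omega)
      rw [this] at hrest; simp at hrest
    · omega
  obtain ⟨j1, hj1⟩ := Finset.card_eq_one.mp hcard'
  have hne01 : j0 ≠ j1 := by
    have : j1 ∈ Finset.univ.erase j0 := by rw [hj1]; exact Finset.mem_singleton_self j1
    exact (Finset.ne_of_mem_erase this).symm
  have hmb1 : m j1 * b j1 = 1 := by
    rw [hj1, Finset.sum_singleton] at hrest; exact hrest
  have hm1 : m j1 = 1 := Nat.dvd_one.mp ⟨b j1, hmb1.symm⟩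
  have hb1 : b j1 = 1 := Nat.dvd_one.mp ⟨m j1, by rw [mul_comm]; exact hmb1.symm⟩
  have huniv : (Finset.univ : Finset J) = insert j0 {j1} := by
    rw [← hj1, Finset.insert_erase (Finset.mem_univ j0)]
  have hval : (Finset.univ : Finset J).val = j0 ::ₘ {j1} := by
    rw [huniv, Finset.insert_val, Finset.singleton_val,
      Multiset.ndinsert_of_notMem (by simpa using hne01)]
  rw [hval]
  simp [hm0, hb0, hm1, hb1]
end

section
/- Let J be a finite index type and let m, b : J → ℕ satisfy m j ≥ 1 and b j ≥ 1 for all j. Suppose ∑_{j∈J} (m j)·(b j) = 10, ∑_{j∈J} ((m j)·(b j))/((m j)+1) < 2 in ℚ, and the maximum of m over J equals 8. Then the multiset {(m j, b j) : j ∈ J} is one of the three multisets {(8,1),(2,1)}, {(8,1),(1,1),(1,1)}, {(8,1),(1,2)}. -/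
/-- Numerical core of case (3) of Proposition 3.5 (maximal multiplicity α = 8). -/
theorem genus_six_classification_alpha_eight
    (J : Type*) [Fintype J]
    (m b : J → ℕ) (hm : ∀ j, 1 ≤ m j) (hb : ∀ j, 1 ≤ b j)
    (hsum : ∑ j, m j * b j = 10)
    (hlt : ∑ j, ((m j : ℚ) * (b j : ℚ)) / ((m j : ℚ) + 1) < 2)
    (hmax : Finset.univ.sup m = 8) :
    (Finset.univ.val.map (fun j => (m j, b j)) = ({(8,1),(2,1)} : Multiset (ℕ × ℕ))) ∨
    (Finset.univ.val.map (fun j => (m j, b j)) = ({(8,1),(1,1),(1,1)} : Multiset (ℕ × ℕ))) ∨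
    (Finset.univ.val.map (fun j => (m j, b j)) = ({(8,1),(1,2)} : Multiset (ℕ × ℕ))) := by
  classical
  have hne : (Finset.univ : Finset J).Nonempty := by
    rcases (Finset.univ : Finset J).eq_empty_or_nonempty with h | h
    · rw [h] at hmax; simp at hmax
    · exact h
  obtain ⟨j0, -, hj0⟩ := Finset.exists_mem_eq_sup _ hne m
  rw [hmax] at hj0
  have hterm : m j0 * b j0 ≤ 10 := by
    rw [← hsum]
    exact Finset.single_le_sum (f := fun j => m j * b j) (fun i _ => Nat.zero_le _) (Finset.mem_univ j0)
  have hb0 : b j0 = 1 := by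
    rw [← hj0] at hterm
    have := hb j0
    omega
  have h8 : m j0 * b j0 = 8 := by rw [hb0, ← hj0]
  have hrest : ∑ j ∈ Finset.univ.erase j0, m j * b j = 2 := by
    have := Finset.sum_erase_add Finset.univ (fun j => m j * b j) (Finset.mem_univ j0)
    omega
  have hpos : ∀ j : J, 1 ≤ m j * b j := fun j => Nat.mul_pos (hm j) (hb j)
  have hcard : (Finset.univ.erase j0).card ≤ 2 := by
    calc (Finset.univ.erase j0).card = ∑ j ∈ Finset.univ.erase j0, 1 := by
          simp
      _ ≤ ∑ j ∈ Finset.univ.erase j0, m j * b j :=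
          Finset.sum_le_sum (fun j _ => hpos j)
      _ = 2 := hrest
  have huniv : (Finset.univ : Finset J).val = j0 ::ₘ (Finset.univ.erase j0).val := by
    conv_lhs => rw [← Finset.insert_erase (Finset.mem_univ j0)]
    rw [Finset.insert_val_of_notMem (Finset.notMem_erase _ _)]
  interval_cases hc : (Finset.univ.erase j0).card
  · rw [Finset.card_eq_zero.mp hc] at hrest
    simp at hrest
  · obtain ⟨j1, hj1⟩ := Finset.card_eq_one.mp hc
    rw [hj1, Finset.sum_singleton] at hrest
    have hm1 : m j1 ≤ 2 := Nat.le_of_dvd (by norm_num) ⟨b j1, hrest.symm⟩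
    have hb1 : b j1 ≤ 2 := Nat.le_of_dvd (by norm_num) ⟨m j1, by rw [mul_comm]; exact hrest.symm⟩
    have hcase : (m j1 = 2 ∧ b j1 = 1) ∨ (m j1 = 1 ∧ b j1 = 2) := by
      have := hm j1; have := hb j1
      interval_cases (m j1) <;> omega
    rw [huniv, hj1]
    rcases hcase with ⟨hm', hb'⟩ | ⟨hm', hb'⟩
    · left; simp [← hj0, hb0, hm', hb']
    · right; right; simp [← hj0, hb0, hm', hb']
  · obtain ⟨j1, j2, hne12, hj12⟩ := Finset.card_eq_two.mp hc
    rw [hj12, Finset.sum_pair hne12] at hrest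
    have h1 : m j1 * b j1 = 1 := by have := hpos j1; have := hpos j2; omega
    have h2 : m j2 * b j2 = 1 := by have := hpos j1; have := hpos j2; omega
    have hm1 : m j1 = 1 := by
      have := Nat.le_of_dvd one_pos ⟨b j1, h1.symm⟩; have := hm j1; omega
    have hb1 : b j1 = 1 := by
      have := Nat.le_of_dvd one_pos ⟨m j1, by rw [mul_comm]; exact h1.symm⟩
      have := hb j1; omega
    have hm2 : m j2 = 1 := by
      have := Nat.le_of_dvd one_pos ⟨b j2, h2.symm⟩; have := hm j2; omega
    have hb2 : b j2 = 1 := by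
      have := Nat.le_of_dvd one_pos ⟨m j2, by rw [mul_comm]; exact h2.symm⟩
      have := hb j2; omega
    right; left
    rw [huniv, hj12]
    have : ({j1, j2} : Finset J).val = j1 ::ₘ j2 ::ₘ 0 := by
      rw [Finset.insert_val_of_notMem (by simp [hne12])]
      rfl
    rw [this]
    simp [← hj0, hb0, hm1, hb1, hm2, hb2]
end

section
/- Let J be a finite index type and let m, b : J → ℕ satisfy m j ≥ 1 and b j ≥ 1 for all j. Suppose ∑_{j∈J} (m j)·(b j) = 10, ∑_{j∈J} ((m j)·(b j))/((m j)+1) < 2 in ℚ, and the maximum of m over J equals 7. Then the multiset {(m j, b j) : j ∈ J} equals {(7,1),(3,1)}. -/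
private lemma half_le_term (x y : ℕ) (hx : 1 ≤ x) (hy : 1 ≤ y) :
    (1:ℚ)/2 ≤ ((x:ℚ) * y) / ((x:ℚ) + 1) := by
  have hx' : (1:ℚ) ≤ x := by exact_mod_cast hx
  have hy' : (1:ℚ) ≤ y := by exact_mod_cast hy
  rw [div_le_div_iff₀ (by norm_num) (by linarith)]
  nlinarith

private lemma frac_le_term (x y : ℕ) (hx : 1 ≤ x) (hy : 1 ≤ y) :
    ((x:ℚ) * y) / ((x:ℚ) * y + 1) ≤ ((x:ℚ) * y) / ((x:ℚ) + 1) := by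
  have hx' : (1:ℚ) ≤ x := by exact_mod_cast hx
  have hy' : (1:ℚ) ≤ y := by exact_mod_cast hy
  rw [div_le_div_iff₀ (by nlinarith) (by linarith)]
  nlinarith [mul_nonneg (mul_nonneg (mul_self_nonneg (x:ℚ)) (by linarith : (0:ℚ) ≤ (y:ℚ)))
    (by linarith : (0:ℚ) ≤ (y:ℚ) - 1)]

/-- Numerical core of case (4) of Proposition 3.5 (maximal multiplicity α = 7). -/
theorem genus_six_classification_alpha_seven
    (J : Type*) [Fintype J]
    (m b : J → ℕ) (hm : ∀ j, 1 ≤ m j) (hb : ∀ j, 1 ≤ b j)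
    (hsum : ∑ j, m j * b j = 10)
    (hlt : ∑ j, ((m j : ℚ) * (b j : ℚ)) / ((m j : ℚ) + 1) < 2)
    (hmax : Finset.univ.sup m = 7) :
    Finset.univ.val.map (fun j => (m j, b j)) = ({(7,1),(3,1)} : Multiset (ℕ × ℕ)) := by
  classical
  have hne : (Finset.univ : Finset J).Nonempty := by
    rcases (Finset.univ : Finset J).eq_empty_or_nonempty with h | h
    · rw [h] at hmax; simp at hmax
    · exact h
  obtain ⟨j0, -, hj0⟩ := Finset.exists_mem_eq_sup (Finset.univ : Finset J) hne m
  have hm0 : m j0 = 7 := by rw [hj0] at hmax; exact hmax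
  have hb0 : b j0 = 1 := by
    have h10 : m j0 * b j0 ≤ 10 := hsum ▸
      Finset.single_le_sum (f := fun j => m j * b j) (fun i _ => Nat.zero_le _)
        (Finset.mem_univ j0)
    have := hb j0
    rw [hm0] at h10
    omega
  rw [← Finset.sum_erase_add _ _ (Finset.mem_univ j0)] at hsum hlt
  set S := Finset.univ.erase j0 with hSdef
  rw [hm0, hb0] at hsum
  have hsum3 : ∑ j ∈ S, m j * b j = 3 := by omega
  have hq0 : ((m j0 : ℚ) * (b j0 : ℚ)) / ((m j0 : ℚ) + 1) = 7/8 := by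
    rw [hm0, hb0]; norm_num
  rw [hq0] at hlt
  have hlt' : ∑ j ∈ S, ((m j : ℚ) * (b j : ℚ)) / ((m j : ℚ) + 1) < 9/8 := by linarith
  -- card bound
  have hcard : S.card ≤ 2 := by
    by_contra h
    push_neg at h
    have hlow : (S.card : ℚ) * (1/2) ≤ ∑ j ∈ S, ((m j : ℚ) * (b j : ℚ)) / ((m j : ℚ) + 1) := by
      calc (S.card : ℚ) * (1/2) = ∑ _j ∈ S, (1:ℚ)/2 := by
            rw [Finset.sum_const, nsmul_eq_mul]
        _ ≤ _ := Finset.sum_le_sum fun j _ => half_le_term (m j) (b j) (hm j) (hb j)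
    have : (3:ℚ) ≤ (S.card : ℚ) := by exact_mod_cast h
    linarith
  have huval : (Finset.univ : Finset J).val = j0 ::ₘ S.val :=
    (Multiset.cons_erase (Finset.mem_univ j0 : j0 ∈ Finset.univ)).symm
  rcases (by omega : S.card = 0 ∨ S.card = 1 ∨ S.card = 2) with hc | hc | hc
  · -- card 0
    rw [Finset.card_eq_zero] at hc
    rw [hc] at hsum3
    simp at hsum3
  · -- card 1
    obtain ⟨j1, hS1⟩ := Finset.card_eq_one.mp hc
    rw [hS1, Finset.sum_singleton] at hsum3 hlt'
    have hm1 : m j1 ≤ 3 := by nlinarith [hm j1, hb j1]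
    have hm1' := hm j1
    have hmb : m j1 = 3 ∧ b j1 = 1 := by
      rcases (by omega : m j1 = 1 ∨ m j1 = 2 ∨ m j1 = 3) with h | h | h
      · exfalso
        rw [h] at hsum3 hlt'
        have hb3 : b j1 = 3 := by omega
        rw [hb3] at hlt'
        norm_num at hlt'
      · exfalso; rw [h] at hsum3; omega
      · rw [h] at hsum3; exact ⟨h, by omega⟩
    rw [huval, hS1]
    simp [hm0, hb0, hmb.1, hmb.2]
  · -- card 2 : contradiction
    exfalso
    obtain ⟨j1, j2, hne12, hS2⟩ := Finset.card_eq_two.mp hc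
    rw [hS2, Finset.sum_pair hne12] at hsum3 hlt'
    have h1 := hm j1; have h2 := hm j2
    have h3 := hb j1; have h4 := hb j2
    have hk1 : 1 ≤ m j1 * b j1 := Nat.one_le_iff_ne_zero.mpr (by positivity)
    have hk2 : 1 ≤ m j2 * b j2 := Nat.one_le_iff_ne_zero.mpr (by positivity)
    have key : ∀ i : J, 1 ≤ m i → 1 ≤ b i → m i * b i = 2 →
        (2:ℚ)/3 ≤ ((m i : ℚ) * (b i : ℚ)) / ((m i : ℚ) + 1) := by
      intro i hi1 hi2 hi3
      have hft := frac_le_term (m i) (b i) hi1 hi2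
      have hcast : ((m i : ℚ) * (b i : ℚ)) = 2 := by exact_mod_cast hi3
      rw [hcast] at hft ⊢
      norm_num at hft ⊢
      convert hft using 2
    have hone : ∀ i : J, m i * b i = 1 →
        ((m i : ℚ) * (b i : ℚ)) / ((m i : ℚ) + 1) = 1/2 := by
      intro i hi
      have e1 : m i = 1 := Nat.eq_one_of_mul_eq_one_right hi
      have e2 : b i = 1 := Nat.eq_one_of_mul_eq_one_left hi
      rw [e1, e2]; norm_num
    set k1 := m j1 * b j1 with hk1d
    set k2 := m j2 * b j2 with hk2d
    rcases (by omega : k1 = 1 ∧ k2 = 2 ∨ k1 = 2 ∧ k2 = 1) with ⟨ha, hb'⟩ | ⟨ha, hb'⟩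
    · have e := hone j1 ha
      have f := key j2 h2 h4 hb'
      rw [e] at hlt'
      linarith
    · have e := hone j2 hb'
      have f := key j1 h1 h3 ha
      rw [e] at hlt'
      linarith
end

section
/- Let J be a finite index type and let m, b : J → ℕ satisfy m j ≥ 1 and b j ≥ 1 for all j. Suppose ∑_{j∈J} (m j)·(b j) = 10, ∑_{j∈J} ((m j)·(b j))/((m j)+1) < 2 in ℚ, and the maximum of m over J equals 6. Then the multiset {(m j, b j) : j ∈ J} equals {(6,1),(4,1)}. -/
/-!
The component of multiplicity 6 must be a section (6 b ≤ 10), contributing 6/7 to the second sum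
and leaving total degree 4 and a budget of 8/7 for the others. Since m b/(m + 1) ≥ n/(n + 1) with
n = m b, and n/(n + 1) ≥ (n + 3)/8 for 1 ≤ n ≤ 3, two or more further components would already
cost at least 5/4. A single one has m b = 4, and of (1,4), (2,2), (4,1) only (4,1) fits the budget.
-/

open Finset

section Elementary

variable {K : Type*} [Field K] [LinearOrder K] [IsStrictOrderedRing K]

lemma mul_div_mul_add_one_le_mul_div_add_one {x y : K} (hx : 0 ≤ x) (hy : 1 ≤ y) :
    x * y / (x * y + 1) ≤ x * y / (x + 1) :=
  div_le_div_of_nonneg_left (by positivity) (by linarith) (by nlinarith)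

-- the chord of `n ↦ n / (n + 1)` through `n = 1` and `n = 3`
lemma add_three_div_eight_le_div_add_one {x : K} (h1 : 1 ≤ x) (h3 : x ≤ 3) :
    (x + 3) / 8 ≤ x / (x + 1) := by
  rw [div_le_div_iff₀ (by norm_num) (by linarith)]
  nlinarith

end Elementary

lemma Finset.add_card_le_sum_add_one {ι : Type*} {s : Finset ι} {f : ι → ℕ}
    (hf : ∀ i ∈ s, 1 ≤ f i) {j : ι} (hj : j ∈ s) : f j + s.card ≤ ∑ i ∈ s, f i + 1 := by
  classical
  have hrest : (s.erase j).card • 1 ≤ ∑ i ∈ s.erase j, f i :=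
    card_nsmul_le_sum _ _ _ fun i hi => hf i (mem_of_mem_erase hi)
  rw [← add_sum_erase s f hj]
  rw [card_erase_of_mem hj, smul_eq_mul, mul_one] at hrest
  have := card_pos.mpr ⟨j, hj⟩
  omega

lemma add_three_div_eight_le_mul_div_add_one {m b : ℕ} (hm : 1 ≤ m) (hb : 1 ≤ b)
    (h3 : m * b ≤ 3) : ((m * b : ℕ) + 3 : ℚ) / 8 ≤ (m * b : ℚ) / (m + 1) := by
  have hn : 1 ≤ m * b := Nat.mul_le_mul hm hb
  calc ((m * b : ℕ) + 3 : ℚ) / 8 ≤ (m * b : ℕ) / ((m * b : ℕ) + 1 : ℚ) :=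
        add_three_div_eight_le_div_add_one (by exact_mod_cast hn) (by exact_mod_cast h3)
    _ ≤ (m * b : ℚ) / (m + 1) := by
        push_cast
        exact mul_div_mul_add_one_le_mul_div_add_one (by positivity) (by exact_mod_cast hb)

section DegreeFour

variable {ι : Type*} {s : Finset ι} {m b : ι → ℕ}

lemma card_le_one_of_sum_mul_eq_four (hm : ∀ j ∈ s, 1 ≤ m j) (hb : ∀ j ∈ s, 1 ≤ b j)
    (hsum : ∑ j ∈ s, m j * b j = 4)
    (hlt : ∑ j ∈ s, (m j * b j : ℚ) / (m j + 1) < 8 / 7) : s.card ≤ 1 := by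
  by_contra! hcard
  have hpos : ∀ j ∈ s, 1 ≤ m j * b j := fun j hj => Nat.mul_le_mul (hm j hj) (hb j hj)
  have hsmall : ∀ j ∈ s, m j * b j ≤ 3 := fun j hj => by
    have := s.add_card_le_sum_add_one hpos hj
    omega
  have hlow : ((4 + 3 * s.card : ℕ) : ℚ) / 8 ≤ ∑ j ∈ s, (m j * b j : ℚ) / (m j + 1) := by
    calc ((4 + 3 * s.card : ℕ) : ℚ) / 8 = ∑ j ∈ s, ((m j * b j : ℕ) + 3 : ℚ) / 8 := by
          rw [← sum_div, sum_add_distrib, ← Nat.cast_sum, hsum, sum_const, nsmul_eq_mul]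
          push_cast
          ring
      _ ≤ _ := sum_le_sum fun j hj =>
          add_three_div_eight_le_mul_div_add_one (hm j hj) (hb j hj) (hsmall j hj)
  have : (2 : ℚ) ≤ s.card := by exact_mod_cast hcard
  push_cast at hlow
  linarith

lemma eq_four_and_eq_one_of_mul_eq_four {M B : ℕ} (h : M * B = 4)
    (hlt : (M * B : ℚ) / (M + 1) < 8 / 7) : M = 4 ∧ B = 1 := by
  have hM : M ≤ 4 := Nat.le_of_dvd (by norm_num) ⟨B, h.symm⟩
  have hB : B ≤ 4 := Nat.le_of_dvd (by norm_num) ⟨M, by rw [← h, mul_comm]⟩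
  interval_cases M <;> interval_cases B <;> first | omega | norm_num at hlt

lemma exists_eq_singleton_of_sum_mul_eq_four (hm : ∀ j ∈ s, 1 ≤ m j) (hb : ∀ j ∈ s, 1 ≤ b j)
    (hsum : ∑ j ∈ s, m j * b j = 4)
    (hlt : ∑ j ∈ s, (m j * b j : ℚ) / (m j + 1) < 8 / 7) :
    ∃ j, s = {j} ∧ m j = 4 ∧ b j = 1 := by
  have hcard : s.card = 1 := by
    have := card_le_one_of_sum_mul_eq_four hm hb hsum hlt
    have : s.card ≠ 0 := card_ne_zero.mpr (nonempty_of_sum_ne_zero (by rw [hsum]; norm_num))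
    omega
  obtain ⟨j, rfl⟩ := card_eq_one.mp hcard
  rw [sum_singleton] at hsum hlt
  exact ⟨j, rfl, eq_four_and_eq_one_of_mul_eq_four hsum hlt⟩

end DegreeFour

/-- Numerical core of case (5) of Proposition 3.5 (maximal multiplicity α = 6). -/
theorem genus_six_classification_alpha_six
    (J : Type*) [Fintype J]
    (m b : J → ℕ) (hm : ∀ j, 1 ≤ m j) (hb : ∀ j, 1 ≤ b j)
    (hsum : ∑ j, m j * b j = 10)
    (hlt : ∑ j, ((m j : ℚ) * (b j : ℚ)) / ((m j : ℚ) + 1) < 2)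
    (hmax : Finset.univ.sup m = 6) :
    Finset.univ.val.map (fun j => (m j, b j)) = ({(6,1),(4,1)} : Multiset (ℕ × ℕ)) := by
  classical
  have hne : (univ : Finset J).Nonempty := nonempty_iff_ne_empty.mpr fun h => by simp [h] at hmax
  obtain ⟨j₀, -, hj₀⟩ := exists_mem_eq_sup _ hne m
  rw [hmax] at hj₀
  rw [← add_sum_erase _ _ (mem_univ j₀)] at hsum hlt
  have hb₀ : b j₀ = 1 := by
    have := hb j₀
    rw [← hj₀] at hsum
    omega
  rw [← hj₀, hb₀] at hsum hlt
  obtain ⟨j₁, hrest, hm₁, hb₁⟩ := exists_eq_singleton_of_sum_mul_eq_four (s := univ.erase j₀)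
    (fun j _ => hm j) (fun j _ => hb j) (by omega) (by push_cast at hlt; linarith)
  have hj₁ : j₀ ∉ ({j₁} : Finset J) := hrest ▸ notMem_erase j₀ univ
  rw [← insert_erase (mem_univ j₀), hrest, insert_val_of_notMem hj₁]
  simp [← hj₀, hb₀, hm₁, hb₁]
end

section
/- Let J be a finite index type and let m, b : J → ℕ satisfy m j ≥ 1 and b j ≥ 1 for all j. Suppose ∑_{j∈J} (m j)·(b j) = 10, ∑_{j∈J} ((m j)·(b j))/((m j)+1) < 2 in ℚ, and the maximum of m over J equals 5. Then the multiset {(m j, b j) : j ∈ J} equals either {(5,1),(5,1)} or {(5,2)}. -/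
/-- Numerical core of case (6) of Proposition 3.5 (maximal multiplicity α = 5). -/
theorem genus_six_classification_alpha_five
    (J : Type*) [Fintype J]
    (m b : J → ℕ) (hm : ∀ j, 1 ≤ m j) (hb : ∀ j, 1 ≤ b j)
    (hsum : ∑ j, m j * b j = 10)
    (hlt : ∑ j, ((m j : ℚ) * (b j : ℚ)) / ((m j : ℚ) + 1) < 2)
    (hmax : Finset.univ.sup m = 5) :
    (Finset.univ.val.map (fun j => (m j, b j)) = ({(5,1),(5,1)} : Multiset (ℕ × ℕ))) ∨
    (Finset.univ.val.map (fun j => (m j, b j)) = ({(5,2)} : Multiset (ℕ × ℕ))) := by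
  classical
  -- univ is nonempty
  have hne : (Finset.univ : Finset J).Nonempty := by
    rcases Finset.eq_empty_or_nonempty (Finset.univ : Finset J) with h | h
    · rw [h] at hmax; simp at hmax
    · exact h
  obtain ⟨j0, _, hj0⟩ := Finset.exists_mem_eq_sup _ hne m
  have hj0 : m j0 = 5 := hj0.symm.trans hmax
  have hmle : ∀ j, m j ≤ 5 := fun j => hmax ▸ Finset.le_sup (Finset.mem_univ j)
  set S : Finset J := Finset.univ.erase j0 with hS
  have hj0mem : j0 ∈ (Finset.univ : Finset J) := Finset.mem_univ j0
  have hsplit : ∑ j ∈ S, m j * b j + m j0 * b j0 = 10 := by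
    rw [Finset.sum_erase_add _ _ hj0mem]; exact hsum
  have hsplitQ : (∑ j ∈ S, ((m j : ℚ) * (b j : ℚ)) / ((m j : ℚ) + 1))
      + ((m j0 : ℚ) * (b j0 : ℚ)) / ((m j0 : ℚ) + 1) < 2 := by
    rw [Finset.sum_erase_add _ _ hj0mem]; exact hlt
  -- each term is at least b/2
  have hterm : ∀ j, ((b j : ℚ)) / 2 ≤ ((m j : ℚ) * (b j : ℚ)) / ((m j : ℚ) + 1) := by
    intro j
    have h1 : (1 : ℚ) ≤ (m j : ℚ) := by exact_mod_cast hm j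
    have hb0 : (0 : ℚ) ≤ (b j : ℚ) := by positivity
    rw [div_le_div_iff₀ (by norm_num) (by linarith)]
    nlinarith
  have htermpos : ∀ j, (0 : ℚ) ≤ ((m j : ℚ) * (b j : ℚ)) / ((m j : ℚ) + 1) := by
    intro j
    have h1 : (1 : ℚ) ≤ (m j : ℚ) := by exact_mod_cast hm j
    positivity
  -- b j0 ≤ 2
  have hb0le : b j0 ≤ 2 := by
    by_contra h
    push_neg at h
    have h3 : (3 : ℚ) ≤ (b j0 : ℚ) := by exact_mod_cast h
    have hSnn : (0 : ℚ) ≤ ∑ j ∈ S, ((m j : ℚ) * (b j : ℚ)) / ((m j : ℚ) + 1) :=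
      Finset.sum_nonneg fun j _ => htermpos j
    rw [hj0] at hsplitQ
    push_cast at hsplitQ
    nlinarith
  -- univ.val = j0 ::ₘ S.val
  have hcons : (Finset.univ : Finset J).val = j0 ::ₘ S.val := by
    rw [hS, Finset.erase_val]
    exact (Multiset.cons_erase (Finset.mem_univ j0 : j0 ∈ Finset.univ)).symm
  have hb0ge : 1 ≤ b j0 := hb j0
  interval_cases hb0 : b j0
  · -- b j0 = 1 : remaining sum is 5
    rw [hj0] at hsplitQ
    have hsum5 : ∑ j ∈ S, m j * b j = 5 := by omega
    push_cast at hsplitQ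
    have hSlt : ∑ j ∈ S, ((m j : ℚ) * (b j : ℚ)) / ((m j : ℚ) + 1) < 7/6 := by
      linarith
    -- ∑ b over S ≤ 2
    have hbsum : ∑ j ∈ S, b j ≤ 2 := by
      by_contra h
      push_neg at h
      have h3 : (3 : ℚ) ≤ ∑ j ∈ S, (b j : ℚ) := by
        have : (3 : ℕ) ≤ ∑ j ∈ S, b j := h
        exact_mod_cast this
      have : (∑ j ∈ S, (b j : ℚ)) / 2 ≤ ∑ j ∈ S, ((m j : ℚ) * (b j : ℚ)) / ((m j : ℚ) + 1) := by
        rw [Finset.sum_div]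
        exact Finset.sum_le_sum fun j _ => hterm j
      linarith
    have hcard : S.card ≤ 2 := by
      calc S.card = ∑ j ∈ S, 1 := by simp
        _ ≤ ∑ j ∈ S, b j := Finset.sum_le_sum fun j _ => hb j
        _ ≤ 2 := hbsum
    -- card can't be 0
    have hcardpos : 1 ≤ S.card := by
      by_contra h
      push_neg at h
      interval_cases h' : S.card
      have : S = ∅ := Finset.card_eq_zero.mp h'
      rw [this] at hsum5; simp at hsum5
    interval_cases hc : S.card
    · -- singleton
      obtain ⟨j1, hj1⟩ := Finset.card_eq_one.mp hc
      rw [hj1] at hsum5 hbsum hSlt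
      simp only [Finset.sum_singleton] at hsum5 hbsum hSlt
      have hb1 : b j1 = 1 := by
        have h1 := hm j1
        have h2 := hb j1
        rcases Nat.lt_or_ge (b j1) 2 with h | h
        · omega
        · exfalso
          have hbe : b j1 = 2 := by omega
          rw [hbe] at hsum5
          omega
      rw [hb1] at hsum5
      have hm1 : m j1 = 5 := by omega
      left
      rw [hcons, hj1]
      have hbj0 : b j0 = 1 := hb0
      simp [hj0, hbj0, hm1, hb1]
    · -- two elements : contradiction
      obtain ⟨j1, j2, hne12, hj12⟩ := Finset.card_eq_two.mp hc
      rw [hj12] at hsum5 hbsum hSlt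
      rw [Finset.sum_pair hne12] at hsum5 hbsum hSlt
      have hb1 : b j1 = 1 := by have := hb j1; have := hb j2; omega
      have hb2 : b j2 = 1 := by have := hb j1; have := hb j2; omega
      rw [hb1, hb2] at hsum5 hSlt
      have hmm : m j1 + m j2 = 5 := by omega
      exfalso
      push_cast at hSlt
      simp only [mul_one] at hSlt
      set x := (m j1 : ℚ) with hx
      set y := (m j2 : ℚ) with hy
      have hx1 : (1 : ℚ) ≤ x := by rw [hx]; exact_mod_cast hm j1
      have hy1 : (1 : ℚ) ≤ y := by rw [hy]; exact_mod_cast hm j2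
      have hxy : x + y = 5 := by
        rw [hx, hy]
        exact_mod_cast hmm
      have hxp : (0 : ℚ) < x + 1 := by linarith
      have hyp : (0 : ℚ) < y + 1 := by linarith
      rw [div_add_div _ _ (ne_of_gt hxp) (ne_of_gt hyp),
        div_lt_iff₀ (by positivity)] at hSlt
      nlinarith [mul_nonneg (by linarith : (0:ℚ) ≤ x - 1) (by linarith : (0:ℚ) ≤ y - 1)]
  · -- b j0 = 2 : S is empty
    rw [hj0] at hsplit
    have hS0 : ∑ j ∈ S, m j * b j = 0 := by omega
    have hSempty : S = ∅ := by
      by_contra h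
      obtain ⟨j1, hj1⟩ := Finset.nonempty_iff_ne_empty.mpr h
      have h1 : 1 ≤ m j1 * b j1 := Nat.one_le_iff_ne_zero.mpr (by
        have := hm j1; have := hb j1; positivity)
      have : m j1 * b j1 ≤ ∑ j ∈ S, m j * b j :=
        Finset.single_le_sum (f := fun j => m j * b j) (fun j _ => Nat.zero_le _) hj1
      omega
    right
    rw [hcons, hSempty]
    have hbj0 : b j0 = 2 := hb0
    simp [hj0, hbj0]
end
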